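/- arXiv:2107.08556 — 10 statements merged into one kernel-verified Lean document; each statement's English description precedes it below -/
import Mathlib

section
/- Let E be a finite set and R ⊆ 2^E × 2^E an equivalence relation on 2^E. Then R is the cospanning relation of a violator space on E (i.e., there exists an operator φ : 2^E → 2^E satisfying extensivity and self-convexity such that (X, Y) ∈ R iff φ(X) = φ(Y)) if and only if R satisfies, for all X, Y, Z ⊆ E: (R1) if (X, Y) ∈ R then (X, X ∪ Y) ∈ R; and (R2) if X ⊆ Y ⊆ Z and (X, Z) ∈ R then (X, Y) ∈ R. -/
/-!
The cospanning relation of a violator space satisfies (R1) and (R2) directly by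
self-convexity. Conversely, (R1) makes every class of `R` closed under binary unions, so on a
finite ground set each class contains the union of its members. Taking `φ X` to be that union
gives `R X Y ↔ φ X = φ Y`, and (R2) turns `X ⊆ Y ⊆ φ X` into `R X Y`, which is self-convexity.
-/

/-- An operator is extensive if `X ⊆ φ X` for all `X`. -/
def Extensive {E : Type*} (φ : Set E → Set E) : Prop := ∀ X, X ⊆ φ X

/-- An operator is self-convex if `X ⊆ Y ⊆ φ X` implies `φ X = φ Y`. -/
def SelfConvex {E : Type*} (φ : Set E → Set E) : Prop :=
  ∀ X Y, X ⊆ Y → Y ⊆ φ X → φ X = φ Y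

namespace SelfConvex

variable {E : Type*} {φ : Set E → Set E} {X Y Z : Set E}

theorem eq_union_of_eq (hsc : SelfConvex φ) (hext : Extensive φ) (h : φ X = φ Y) :
    φ X = φ (X ∪ Y) :=
  hsc X (X ∪ Y) Set.subset_union_left (Set.union_subset (hext X) (h ▸ hext Y))

theorem eq_of_subset_of_subset (hsc : SelfConvex φ) (hext : Extensive φ) (hXY : X ⊆ Y)
    (hYZ : Y ⊆ Z) (h : φ X = φ Z) : φ X = φ Y :=
  hsc X Y hXY (hYZ.trans (h ▸ hext Z))

end SelfConvex

def classUnion {E : Type*} (R : Set E → Set E → Prop) (X : Set E) : Set E := ⋃₀ {Y | R X Y}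

section classUnion

variable {E : Type*} {R : Set E → Set E → Prop}

theorem extensive_classUnion (hR : Equivalence R) : Extensive (classUnion R) :=
  fun X => Set.subset_sUnion_of_mem (hR.refl X)

theorem classUnion_eq_of_rel (hR : Equivalence R) {X Y : Set E} (h : R X Y) :
    classUnion R X = classUnion R Y := by
  unfold classUnion
  congr 1
  ext Z
  exact ⟨hR.trans (hR.symm h), hR.trans h⟩

theorem supClosed_setOf_rel (hR : Equivalence R) (hunion : ∀ X Y, R X Y → R X (X ∪ Y))
    (X : Set E) : SupClosed {Y | R X Y} :=
  fun _ hA B hB => hR.trans hA (hunion _ B (hR.trans (hR.symm hA) hB))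

variable [Finite E]

theorem rel_classUnion (hR : Equivalence R) (hunion : ∀ X Y, R X Y → R X (X ∪ Y))
    (X : Set E) : R X (classUnion R X) :=
  (supClosed_setOf_rel hR hunion X).sSup_mem_of_nonempty (Set.toFinite _) ⟨X, hR.refl X⟩ le_rfl

theorem rel_iff_classUnion_eq (hR : Equivalence R) (hunion : ∀ X Y, R X Y → R X (X ∪ Y))
    (X Y : Set E) : R X Y ↔ classUnion R X = classUnion R Y :=
  ⟨classUnion_eq_of_rel hR, fun h =>
    hR.trans (rel_classUnion hR hunion X) (h ▸ hR.symm (rel_classUnion hR hunion Y))⟩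

theorem selfConvex_classUnion (hR : Equivalence R) (hunion : ∀ X Y, R X Y → R X (X ∪ Y))
    (hconvex : ∀ X Y Z : Set E, X ⊆ Y → Y ⊆ Z → R X Z → R X Y) :
    SelfConvex (classUnion R) :=
  fun X Y hXY hY => classUnion_eq_of_rel hR (hconvex X Y _ hXY hY (rel_classUnion hR hunion X))

end classUnion

theorem stmt2 {E : Type*} [Fintype E] (R : Set E → Set E → Prop) (hR : Equivalence R) :
    (∃ φ : Set E → Set E, Extensive φ ∧ SelfConvex φ ∧ ∀ X Y, R X Y ↔ φ X = φ Y) ↔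
      ((∀ X Y : Set E, R X Y → R X (X ∪ Y)) ∧
       (∀ X Y Z : Set E, X ⊆ Y → Y ⊆ Z → R X Z → R X Y)) := by
  constructor
  · rintro ⟨φ, hext, hsc, hcospan⟩
    simp only [hcospan]
    exact ⟨fun _ _ => hsc.eq_union_of_eq hext, fun _ _ _ => hsc.eq_of_subset_of_subset hext⟩
  · rintro ⟨hunion, hconvex⟩
    exact ⟨classUnion R, extensive_classUnion hR,
      selfConvex_classUnion hR hunion hconvex, rel_iff_classUnion_eq hR hunion⟩
end

section
/- Let E be a finite set and R ⊆ 2^E × 2^E an equivalence relation on 2^E. Then R is the cospanning relation of a co-violator space on E (i.e., there exists an operator c : 2^E → 2^E satisfying c(X) ⊆ X for all X and the property that c(X) ⊆ Y ⊆ X implies c(X) = c(Y), such that (X, Y) ∈ R iff c(X) = c(Y)) if and only if R satisfies, for all X, Y, Z ⊆ E: (R3) if (X, Y) ∈ R then (X, X ∩ Y) ∈ R; and (R2) if X ⊆ Y ⊆ Z and (X, Z) ∈ R then (X, Y) ∈ R. -/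
/-!
A co-violator operator `c` is constant on each interval `[c X, X]`, which gives (R2) and (R3) for
its cospanning relation. Conversely, (R3) makes every equivalence class closed under intersection,
so by finiteness the intersection of the class of `X` lies in that class; this "kernel" map is a
co-violator operator, by (R2), whose cospanning relation is `R`.
-/

section

variable {E : Type*}

structure IsCoViolator (c : Set E → Set E) : Prop where
  subset : ∀ X, c X ⊆ X
  eq_of_subset : ∀ X Y, c X ⊆ Y → Y ⊆ X → c X = c Y

namespace IsCoViolator

variable {c : Set E → Set E} (hc : IsCoViolator c) {X Y Z : Set E}
include hc

theorem eq_inter (h : c X = c Y) : c X = c (X ∩ Y) :=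
  hc.eq_of_subset X _ (Set.subset_inter (hc.subset X) (h ▸ hc.subset Y)) Set.inter_subset_left

theorem eq_of_subset_of_subset (hXY : X ⊆ Y) (hYZ : Y ⊆ Z) (h : c X = c Z) : c X = c Y := by
  rw [h]
  exact hc.eq_of_subset Z Y (h ▸ (hc.subset X).trans hXY) hYZ

end IsCoViolator

def cospanningKernel (R : Set E → Set E → Prop) (X : Set E) : Set E :=
  ⋂₀ {Y | R X Y}

section cospanningKernel

variable {R : Set E → Set E → Prop} (hR : Equivalence R)
include hR

theorem cospanningKernel_subset (X : Set E) : cospanningKernel R X ⊆ X :=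
  Set.sInter_subset_of_mem (hR.refl X)

theorem cospanningKernel_eq_of_rel {X Y : Set E} (h : R X Y) :
    cospanningKernel R X = cospanningKernel R Y := by
  have hclass : {Z | R X Z} = {Z | R Y Z} := by
    ext Z
    exact ⟨hR.trans (hR.symm h), hR.trans h⟩
  simp only [cospanningKernel, hclass]

variable [Finite E] (hinter : ∀ X Y, R X Y → R X (X ∩ Y))
include hinter

theorem rel_cospanningKernel (X : Set E) : R X (cospanningKernel R X) := by
  have hclosed : InfClosed {Y | R X Y} := fun A hA B hB =>
    hR.trans hA (hinter A B (hR.trans (hR.symm hA) hB))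
  exact hclosed.sInf_mem_of_nonempty (Set.toFinite _) ⟨X, hR.refl X⟩ subset_rfl

theorem cospanningKernel_eq_iff {X Y : Set E} :
    cospanningKernel R X = cospanningKernel R Y ↔ R X Y := by
  refine ⟨fun h => ?_, cospanningKernel_eq_of_rel hR⟩
  exact hR.trans (rel_cospanningKernel hR hinter X) (h ▸ hR.symm (rel_cospanningKernel hR hinter Y))

theorem isCoViolator_cospanningKernel (hconvex : ∀ X Y Z, X ⊆ Y → Y ⊆ Z → R X Z → R X Y) :
    IsCoViolator (cospanningKernel R) where
  subset := cospanningKernel_subset hR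
  eq_of_subset X Y hkY hYX := by
    have hkX := hR.symm (rel_cospanningKernel hR hinter X)
    exact cospanningKernel_eq_of_rel hR (hR.trans (hR.symm hkX) (hconvex _ Y X hkY hYX hkX))

end cospanningKernel

end

theorem stmt3 {E : Type*} [Fintype E] (R : Set E → Set E → Prop) (hR : Equivalence R) :
    (∃ c : Set E → Set E, (∀ X, c X ⊆ X) ∧ (∀ X Y, c X ⊆ Y → Y ⊆ X → c X = c Y) ∧
        ∀ X Y, R X Y ↔ c X = c Y) ↔
      ((∀ X Y : Set E, R X Y → R X (X ∩ Y)) ∧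
       (∀ X Y Z : Set E, X ⊆ Y → Y ⊆ Z → R X Z → R X Y)) := by
  constructor
  · rintro ⟨c, hsub, hcv, hRc⟩
    have hc : IsCoViolator c := ⟨hsub, hcv⟩
    simp only [hRc]
    exact ⟨fun X Y => hc.eq_inter, fun X Y Z => hc.eq_of_subset_of_subset⟩
  · rintro ⟨hinter, hconvex⟩
    have hk := isCoViolator_cospanningKernel hR hinter hconvex
    exact ⟨cospanningKernel R, hk.subset, hk.eq_of_subset,
      fun X Y => (cospanningKernel_eq_iff hR hinter).symm⟩
end

section
/- Let E be a finite set and R an equivalence relation on 2^E satisfying (R1) (X, Y) ∈ R implies (X, X ∪ Y) ∈ R, and (R2) X ⊆ Y ⊆ Z and (X, Z) ∈ R imply (X, Y) ∈ R. Then R satisfies (R3): (X, Y) ∈ R implies (X, X ∩ Y) ∈ R, if and only if R satisfies (R33): for all X ⊆ E and distinct p, q ∉ X, if (X, X ∪ {p}) ∉ R, (X, X ∪ {q}) ∉ R, and (X ∪ {p}, X ∪ {p, q}) ∈ R, then (X ∪ {q}, X ∪ {p, q}) ∉ R. -/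
/-!
Under (R2), condition (R33) yields an exchange property: if `W + p` and `W + q` are both equivalent
to `W + p + q`, then `W` is equivalent to `W + p`. By induction on `Z \ X`, this shows that when
`Z - p ~ Z`, every `X ⊆ Z` with `X ~ Z` satisfies `X - p ~ Z`. Removing the points of `X \ Y` one
at a time then gives `X ∩ Y ~ Z` whenever `X ~ Z` and `Y ~ Z` with `X, Y ⊆ Z`; (R3) follows by taking
`Z = X ∪ Y`, which is equivalent to both `X` and `Y` by (R1).
-/

open Set

section

variable {E : Type*}

theorem Set.insert_inter_insert_of_ne {p q : E} (hpq : p ≠ q) (X : Set E) :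
    insert p X ∩ insert q X = X := by
  grind

variable {R : Set E → Set E → Prop}

/-- Condition (R2). -/
def IsIntervalClosed (R : Set E → Set E → Prop) : Prop :=
  ∀ X Y Z : Set E, X ⊆ Y → Y ⊆ Z → R X Z → R X Y

/-- Condition (R3). -/
def IsInterClosed (R : Set E → Set E → Prop) : Prop :=
  ∀ X Y : Set E, R X Y → R X (X ∩ Y)

/-- Condition (R33). -/
def SquareCondition (R : Set E → Set E → Prop) : Prop :=
  ∀ (X : Set E) (p q : E), p ≠ q → p ∉ X → q ∉ X →
    ¬ R X (insert p X) → ¬ R X (insert q X) →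
    R (insert p X) (insert p (insert q X)) →
    ¬ R (insert q X) (insert p (insert q X))

theorem squareCondition_of_isInterClosed (hR : Equivalence R) (h3 : IsInterClosed R) :
    SquareCondition R := by
  intro X p q hpq _ _ hXp _ hp hq
  have hpX := h3 _ _ (hR.trans hp (hR.symm hq))
  rw [insert_inter_insert_of_ne hpq] at hpX
  exact hXp (hR.symm hpX)

theorem rel_insert_of_rel_insert_insert (hR : Equivalence R) (hR2 : IsIntervalClosed R)
    (h33 : SquareCondition R) {W : Set E} {p q : E} (hpq : p ≠ q) (hp : p ∉ W) (hq : q ∉ W)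
    (hpW : R (insert p W) (insert p (insert q W)))
    (hqW : R (insert q W) (insert p (insert q W))) :
    R W (insert p W) := by
  by_contra hWp
  by_cases hWq : R W (insert q W)
  · exact hWp <| hR2 _ _ _ (subset_insert p W) (insert_subset_insert (subset_insert q W))
      (hR.trans hWq hqW)
  · exact h33 W q p hpq.symm hq hp hWq hWp (insert_comm q p W ▸ hqW) (insert_comm q p W ▸ hpW)

theorem rel_of_rel_insert_of_rel_sdiff_singleton [Finite E] (hR : Equivalence R)
    (hR2 : IsIntervalClosed R) (h33 : SquareCondition R) {Z W : Set E} {p : E}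
    (hZ : R (Z \ {p}) Z) (hp : p ∉ W) (hWZ : insert p W ⊆ Z) (hW : R (insert p W) Z) :
    R W Z := by
  induction W using WellFoundedGT.induction with
  | _ W ih =>
  obtain rfl | hssub := eq_or_ssubset_of_subset hWZ
  · rwa [insert_sdiff_self_of_notMem hp] at hZ
  obtain ⟨q, hqZ, hqW⟩ := exists_of_ssubset hssub
  have hpq : p ≠ q := by rintro rfl; exact hqW (mem_insert p W)
  have hqW' : q ∉ W := fun h => hqW (mem_insert_of_mem p h)
  have hpqZ : insert p (insert q W) ⊆ Z := by
    rw [insert_comm]; exact insert_subset hqZ hWZ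
  have hpW : R (insert p W) (insert p (insert q W)) :=
    hR2 _ _ _ (insert_subset_insert (subset_insert q W)) hpqZ hW
  have hpqW : R (insert p (insert q W)) Z := hR.trans (hR.symm hpW) hW
  have hqW : R (insert q W) Z :=
    ih _ (ssubset_insert hqW') (by simp [hp, hpq]) hpqZ hpqW
  have hWp := rel_insert_of_rel_insert_insert hR hR2 h33 hpq hp hqW' hpW
    (hR.trans hqW (hR.symm hpqW))
  exact hR.trans hWp hW

theorem inter_rel_of_rel_of_rel [Finite E] (hR : Equivalence R) (hR2 : IsIntervalClosed R)
    (h33 : SquareCondition R) {X Y Z : Set E} (hXZ : X ⊆ Z) (hYZ : Y ⊆ Z) (hX : R X Z)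
    (hY : R Y Z) : R (X ∩ Y) Z := by
  induction X using WellFoundedLT.induction with
  | _ X ih =>
  by_cases hXY : X ⊆ Y
  · rwa [inter_eq_self_of_subset_left hXY]
  obtain ⟨p, hpX, hpY⟩ := not_subset.mp hXY
  have hZp : R (Z \ {p}) Z :=
    hR.trans (hR.symm (hR2 _ _ _ (subset_sdiff_singleton hYZ hpY) sdiff_subset hY)) hY
  have hXp : R (X \ {p}) Z := by
    refine rel_of_rel_insert_of_rel_sdiff_singleton hR hR2 h33 hZp (by simp) ?_ ?_ <;>
      rwa [insert_sdiff_self_of_mem hpX]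
  have hXpY := ih _ (sdiff_singleton_ssubset.mpr hpX) (sdiff_subset.trans hXZ) hXp
  rwa [← inter_sdiff_right_comm, sdiff_singleton_eq_self fun h => hpY h.2] at hXpY

theorem isInterClosed_of_squareCondition [Finite E] (hR : Equivalence R)
    (hR1 : ∀ X Y : Set E, R X Y → R X (X ∪ Y)) (hR2 : IsIntervalClosed R)
    (h33 : SquareCondition R) : IsInterClosed R := by
  intro X Y hXY
  have hX : R X (X ∪ Y) := hR1 X Y hXY
  have hY : R Y (X ∪ Y) := union_comm Y X ▸ hR1 Y X (hR.symm hXY)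
  exact hR.trans hX <| hR.symm <|
    inter_rel_of_rel_of_rel hR hR2 h33 subset_union_left subset_union_right hX hY

end

theorem stmt6 {E : Type*} [Fintype E] (R : Set E → Set E → Prop) (hR : Equivalence R)
    (hR1 : ∀ X Y : Set E, R X Y → R X (X ∪ Y))
    (hR2 : ∀ X Y Z : Set E, X ⊆ Y → Y ⊆ Z → R X Z → R X Y) :
    (∀ X Y : Set E, R X Y → R X (X ∩ Y)) ↔
      (∀ (X : Set E) (p q : E), p ≠ q → p ∉ X → q ∉ X →
        ¬ R X (insert p X) → ¬ R X (insert q X) →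
        R (insert p X) (insert p (insert q X)) →
        ¬ R (insert q X) (insert p (insert q X))) :=
  ⟨squareCondition_of_isInterClosed hR, isInterClosed_of_squareCondition hR hR1 hR2⟩
end

section
/- Let (E, φ) be a violator space and for X ⊆ E let ex(X) = {x ∈ X : x ∉ φ(X \ {x})} be its set of extreme points. Then the following are equivalent: (i) (E, φ) is uniquely generated (every X ⊆ E has a unique inclusion-minimal set B with φ(B) = φ(X)); (ii) for all X, Y ⊆ E, ex(X) ⊆ Y ⊆ X implies ex(X) = ex(Y); (iii) φ(ex(X)) = φ(X) for all X ⊆ E; (iv) ex(φ(X)) = ex(X) for all X ⊆ E. -/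
/-- `B` is a basis of `X`: an inclusion-minimal set with `φ B = φ X`. -/
def IsBasis {E : Type*} (φ : Set E → Set E) (B X : Set E) : Prop :=
  φ B = φ X ∧ ∀ C, C ⊂ B → φ C ≠ φ X

/-- A space is uniquely generated if every set has a unique basis. -/
def UniquelyGenerated {E : Type*} (φ : Set E → Set E) : Prop :=
  ∀ X : Set E, ∃! B, IsBasis φ B X

/-- The set of extreme points of `X` with respect to `φ`. -/
def extremePoints {E : Type*} (φ : Set E → Set E) (X : Set E) : Set E :=
  {x ∈ X | x ∉ φ (X \ {x})}

/-!
Every generator `B ⊆ X` of `X` contains `ex X`, and a basis `B` is its own set of extreme points.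
Under unique generation the basis of `X` lies in every generator, in particular in `X \ {x}` for
each non-extreme `x`, so it is exactly `ex X`; this gives (iii). Conversely (iv) identifies every
basis `C` of `X` with `ex C = ex (φ C) = ex (φ X)`, which is unique generation. (iii) makes
`Y` a generator of `X` whenever `ex X ⊆ Y ⊆ X`, and (ii) applied to `X ⊆ φ X` is (iv) because
`ex (φ X) ⊆ X`.
-/

section ViolatorSpace

variable {E : Type*} {φ : Set E → Set E} {B X Y : Set E}

lemma exists_isBasis_subset [Finite E] (h : φ Y = φ X) : ∃ B ⊆ Y, IsBasis φ B X := by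
  obtain ⟨B, hBY, hB⟩ := exists_minimal_le_of_wellFoundedLT (fun B => φ B = φ X) Y h
  exact ⟨B, hBY, hB.prop, fun C hC => hB.not_prop_of_lt hC⟩

lemma UniquelyGenerated.subset_of_isBasis [Finite E] (hug : UniquelyGenerated φ)
    (hB : IsBasis φ B X) (h : φ Y = φ X) : B ⊆ Y := by
  obtain ⟨C, hCY, hC⟩ := exists_isBasis_subset h
  exact ((hug X).unique hB hC).symm ▸ hCY

variable (hext : Extensive φ) (hsc : SelfConvex φ)
include hext hsc

lemma phi_phi (X : Set E) : φ (φ X) = φ X :=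
  (hsc X (φ X) (hext X) subset_rfl).symm

lemma phi_diff_singleton_eq {x : E} (hx : x ∈ X) (hnx : x ∉ extremePoints φ X) :
    φ (X \ {x}) = φ X := by
  have hxφ : x ∈ φ (X \ {x}) := by_contra fun h => hnx ⟨hx, h⟩
  refine hsc _ X Set.sdiff_subset fun y hy => ?_
  obtain rfl | hyx := eq_or_ne y x
  · exact hxφ
  · exact hext _ ⟨hy, hyx⟩

lemma extremePoints_subset_of_phi_eq (hBX : B ⊆ X) (h : φ B = φ X) :
    extremePoints φ X ⊆ B := by
  intro x hx
  by_contra hxB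
  have hB : B ⊆ X \ {x} := fun z hz => ⟨hBX hz, fun hzx => hxB (hzx ▸ hz)⟩
  have hφ : φ B = φ (X \ {x}) := hsc B _ hB (h ▸ fun z hz => hext X hz.1)
  exact hx.2 (hφ ▸ h ▸ hext X hx.1)

lemma extremePoints_phi_subset (X : Set E) : extremePoints φ (φ X) ⊆ X :=
  extremePoints_subset_of_phi_eq hext hsc (hext X) (phi_phi hext hsc X).symm

lemma extremePoints_subset_extremePoints_of_phi_eq (hYX : Y ⊆ X) (h : φ Y = φ X) :
    extremePoints φ X ⊆ extremePoints φ Y := by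
  intro x hx
  have hxY : x ∈ Y := extremePoints_subset_of_phi_eq hext hsc hYX h hx
  refine ⟨hxY, fun hxφ => hx.2 ?_⟩
  have hY : φ (Y \ {x}) = φ Y := phi_diff_singleton_eq hext hsc hxY fun hex => hex.2 hxφ
  have hYX' : φ (Y \ {x}) = φ (X \ {x}) :=
    hsc _ _ (Set.sdiff_subset_sdiff_left hYX) (hY ▸ h ▸ fun z hz => hext X hz.1)
  exact hYX' ▸ hxφ

lemma IsBasis.extremePoints_eq (hB : IsBasis φ B X) : extremePoints φ B = B := by
  refine Set.Subset.antisymm (fun _ hb => hb.1) fun b hb => by_contra fun hnb => ?_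
  exact hB.2 _ (Set.sdiff_singleton_ssubset.mpr hb)
    ((phi_diff_singleton_eq hext hsc hb hnb).trans hB.1)

lemma extremePoints_eq_of_subset (h : φ (extremePoints φ X) = φ X)
    (hexY : extremePoints φ X ⊆ Y) (hYX : Y ⊆ X) : extremePoints φ X = extremePoints φ Y := by
  have hφY : φ Y = φ X := (hsc _ Y hexY (h ▸ hYX.trans (hext X))).symm.trans h
  exact (extremePoints_subset_extremePoints_of_phi_eq hext hsc hYX hφY).antisymm
    (extremePoints_subset_of_phi_eq hext hsc hexY (h.trans hφY.symm))

lemma UniquelyGenerated.phi_extremePoints [Finite E] (hug : UniquelyGenerated φ) (X : Set E) :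
    φ (extremePoints φ X) = φ X := by
  obtain ⟨B, hBX, hB⟩ := exists_isBasis_subset (φ := φ) (rfl : φ X = φ X)
  suffices B ⊆ extremePoints φ X by
    rw [(extremePoints_subset_of_phi_eq hext hsc hBX hB.1).antisymm this, hB.1]
  exact fun b hb => by_contra fun hnb =>
    (hug.subset_of_isBasis hB (phi_diff_singleton_eq hext hsc (hBX hb) hnb) hb).2 rfl

lemma uniquelyGenerated_of_extremePoints_phi [Finite E]
    (h : ∀ X, extremePoints φ (φ X) = extremePoints φ X) : UniquelyGenerated φ := by
  intro X
  have hC : ∀ C, IsBasis φ C X → C = extremePoints φ (φ X) := fun C hC => by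
    rw [← hC.1, h, hC.extremePoints_eq hext hsc]
  obtain ⟨B, -, hB⟩ := exists_isBasis_subset (φ := φ) (rfl : φ X = φ X)
  exact ⟨B, hB, fun C hC' => (hC C hC').trans (hC B hB).symm⟩

end ViolatorSpace

theorem stmt7 {E : Type*} [Fintype E] (φ : Set E → Set E)
    (hext : Extensive φ) (hsc : SelfConvex φ) :
    List.TFAE
      [UniquelyGenerated φ,
       ∀ X Y : Set E, extremePoints φ X ⊆ Y → Y ⊆ X → extremePoints φ X = extremePoints φ Y,
       ∀ X : Set E, φ (extremePoints φ X) = φ X,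
       ∀ X : Set E, extremePoints φ (φ X) = extremePoints φ X] := by
  tfae_have 1 → 3 := UniquelyGenerated.phi_extremePoints hext hsc
  tfae_have 3 → 2 := fun h3 X Y => extremePoints_eq_of_subset hext hsc (h3 X)
  tfae_have 2 → 4 := fun h2 X => h2 (φ X) X (extremePoints_phi_subset hext hsc X) (hext X)
  tfae_have 4 → 1 := uniquelyGenerated_of_extremePoints_phi hext hsc
  tfae_finish
end

section
/- Let E be a finite set and P' a hypercube partition of 2^E (a partition of 2^E into intervals [A, B] = {C : A ⊆ C ⊆ B}) satisfying the accessibility property: for every interval [A, B] ∈ P' and every x ∈ A, there exists C ⊆ E such that [C, B \ {x}] ∈ P'. Let N = {B : [A, B] ∈ P' for some A}. Then for every [A, B] ∈ P' and every C ⊆ B with C ∉ [A, B], there exists x ∈ B \ C such that B \ {x} ∈ N. -/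
/-- The interval `[A, B]` of sets between `A` and `B`. -/
def SetInterval {E : Type*} (A B : Set E) : Set (Set E) := {C | A ⊆ C ∧ C ⊆ B}

/-- A hypercube partition of `2^E`, given as a collection of pairs `(A, B)` with
`A ⊆ B`, whose intervals partition `2^E`: every set lies in exactly one interval. -/
def IsHypercubePartition {E : Type*} (P : Set (Set E × Set E)) : Prop :=
  (∀ p ∈ P, p.1 ⊆ p.2) ∧
  ∀ C : Set E, ∃! p : Set E × Set E, p ∈ P ∧ C ∈ SetInterval p.1 p.2

theorem exists_mem_diff_of_subset_of_notMem_setInterval {E : Type*} {A B C : Set E}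
    (hCB : C ⊆ B) (hC : C ∉ SetInterval A B) : ∃ x ∈ A, x ∉ C :=
  Set.not_subset.mp fun hAC => hC ⟨hAC, hCB⟩

theorem stmt10_general {E : Type*} (P : Set (Set E × Set E))
    (hP : IsHypercubePartition P)
    (hacc : ∀ A B : Set E, (A, B) ∈ P → ∀ x ∈ A, ∃ C : Set E, (C, B \ {x}) ∈ P)
    (A B : Set E) (hAB : (A, B) ∈ P) (C : Set E) (hCB : C ⊆ B)
    (hC : C ∉ SetInterval A B) :
    ∃ x ∈ B \ C, ∃ A' : Set E, (A', B \ {x}) ∈ P := by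
  obtain ⟨x, hxA, hxC⟩ := exists_mem_diff_of_subset_of_notMem_setInterval hCB hC
  exact ⟨x, ⟨hP.1 (A, B) hAB hxA, hxC⟩, hacc A B hAB x hxA⟩

theorem stmt10 {E : Type*} [Fintype E] (P : Set (Set E × Set E))
    (hP : IsHypercubePartition P)
    (hacc : ∀ A B : Set E, (A, B) ∈ P → ∀ x ∈ A, ∃ C : Set E, (C, B \ {x}) ∈ P)
    (A B : Set E) (hAB : (A, B) ∈ P) (C : Set E) (hCB : C ⊆ B)
    (hC : C ∉ SetInterval A B) :
    ∃ x ∈ B \ C, ∃ A' : Set E, (A', B \ {x}) ∈ P :=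
  stmt10_general P hP hacc A B hAB C hCB hC
end

section
/- Let E be a finite set and R an equivalence relation on 2^E. Then R is the cospanning relation of a convex geometry on E (i.e., there exists a closure operator τ on E satisfying the anti-exchange property such that (X, Y) ∈ R iff τ(X) = τ(Y)) if and only if R satisfies, for all X, Y, Z ⊆ E: (R1) (X, Y) ∈ R implies (X, X ∪ Y) ∈ R; (R2) X ⊆ Y ⊆ Z and (X, Z) ∈ R imply (X, Y) ∈ R; (R3) (X, Y) ∈ R implies (X, X ∩ Y) ∈ R; and (R4') for all x ∈ X and y ∉ X, if (X, X ∪ {z}) ∉ R for all z ∉ X and (X, X \ {x}) ∉ R, then (X \ {x}, (X \ {x}) ∪ {y}) ∉ R. -/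
/-!
For a closure operator `τ`, (R1), (R2) and (R4') are immediate. For (R3), let `A = τ X = τ Y` and
suppose `τ (X ∩ Y) ⊂ A`. By anti-exchange, a maximal closed set between them misses exactly one
point `a` of `A`; as `A \ {a}` is closed, `a` lies in every set generating `A`, hence in `X ∩ Y`,
a contradiction.

Conversely, (R1) and (R3) make every class closed under unions and intersections, so it has a
largest member `τ X` (`classSup`) and a least member `μ X` (`classInf`), and with (R2) the class
is the interval `[μ X, τ X]`. The crux is monotonicity of `τ`: if `C` is closed and `x ∈ μ C`,
then (R4') makes `C \ {x}` closed, so peeling such points off `C` shrinks it onto any `Z ⊆ C`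
until `μ C ⊆ Z`, at which point `Z` is cospanning with the closed set reached. Anti-exchange holds
because cospanning sets `insert p X` and `insert q X` force `μ (insert p X) ⊆ X`, so `X` is
cospanning with `insert p X`.
-/

/-- `τ` is a closure operator: extensive, isotone, idempotent. -/
def IsClosureOp {E : Type*} (τ : Set E → Set E) : Prop :=
  (∀ X, X ⊆ τ X) ∧ (∀ X Y, X ⊆ Y → τ X ⊆ τ Y) ∧ (∀ X, τ (τ X) = τ X)

/-- The anti-exchange property of an operator. -/
def AntiExchange {E : Type*} (τ : Set E → Set E) : Prop :=
  ∀ (X : Set E) (p q : E), p ≠ q → p ∉ τ X → q ∉ τ X →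
    p ∈ τ (insert q X) → q ∉ τ (insert p X)

section

open Set

variable {E : Type*}

def UnionStable (R : Set E → Set E → Prop) : Prop :=
  ∀ X Y : Set E, R X Y → R X (X ∪ Y)

def OrdConnectedClasses (R : Set E → Set E → Prop) : Prop :=
  ∀ X Y Z : Set E, X ⊆ Y → Y ⊆ Z → R X Z → R X Y

def InterStable (R : Set E → Set E → Prop) : Prop :=
  ∀ X Y : Set E, R X Y → R X (X ∩ Y)

def ExtremeDeletionClosed (R : Set E → Set E → Prop) : Prop :=
  ∀ (X : Set E) (x y : E), x ∈ X → y ∉ X →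
    (∀ z ∉ X, ¬ R X (insert z X)) → ¬ R X (X \ {x}) →
    ¬ R (X \ {x}) (insert y (X \ {x}))

namespace IsClosureOp

variable {τ : Set E → Set E}

theorem closure_subset_closure (hτ : IsClosureOp τ) {X Y : Set E} (h : X ⊆ τ Y) :
    τ X ⊆ τ Y :=
  (hτ.2.1 _ _ h).trans (hτ.2.2 Y).subset

theorem closure_eq_of_subset_of_subset_closure (hτ : IsClosureOp τ) {X Y : Set E}
    (hXY : X ⊆ Y) (hYX : Y ⊆ τ X) : τ Y = τ X :=
  subset_antisymm (hτ.closure_subset_closure hYX) (hτ.2.1 _ _ hXY)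

theorem unionStable (hτ : IsClosureOp τ) : UnionStable fun X Y : Set E ↦ τ X = τ Y :=
  fun X Y h ↦ (hτ.closure_eq_of_subset_of_subset_closure subset_union_left
    (union_subset (hτ.1 X) (h ▸ hτ.1 Y))).symm

theorem ordConnectedClasses (hτ : IsClosureOp τ) :
    OrdConnectedClasses fun X Y : Set E ↦ τ X = τ Y :=
  fun _ _ _ hXY hYZ h ↦
    (hτ.closure_eq_of_subset_of_subset_closure hXY ((hYZ.trans (hτ.1 _)).trans h.symm.subset)).symm

theorem extremeDeletionClosed (hτ : IsClosureOp τ) :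
    ExtremeDeletionClosed fun X Y : Set E ↦ τ X = τ Y := by
  intro X x y _ hy hXclosed _ hRy
  have hX : τ X = X := by
    refine subset_antisymm (fun w hw ↦ ?_) (hτ.1 X)
    by_contra hwX
    exact hXclosed w hwX (hτ.closure_eq_of_subset_of_subset_closure (subset_insert w X)
      (insert_subset hw (hτ.1 X))).symm
  have hyτ : y ∈ τ (X \ {x}) := hRy ▸ hτ.1 _ (mem_insert y _)
  exact hy (hX ▸ hτ.2.1 _ _ sdiff_subset hyτ)

theorem mem_of_closure_eq (hτ : IsClosureOp τ) {A W : Set E} {a : E} (ha : a ∈ A)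
    (hdel : τ (A \ {a}) = A \ {a}) (hW : τ W = A) : a ∈ W := by
  by_contra haW
  have hWA : W ⊆ A \ {a} := fun w hw ↦ ⟨hW ▸ hτ.1 W hw, ne_of_mem_of_not_mem hw haW⟩
  exact (hdel ▸ hτ.2.1 _ _ hWA (hW ▸ ha)).2 rfl

theorem exists_closure_diff_singleton_eq [Finite E] (hτ : IsClosureOp τ) (hae : AntiExchange τ)
    {C A : Set E} (hC : τ C = C) (hA : τ A = A) (hCA : C ⊂ A) :
    ∃ a ∈ A \ C, τ (A \ {a}) = A \ {a} := by
  obtain ⟨D, hCD, hD⟩ := Finite.exists_le_maximal (p := fun D ↦ τ D = D ∧ D ⊂ A) ⟨hC, hCA⟩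
  obtain ⟨hDcl, hDA⟩ := hD.prop
  have hgen : ∀ a ∈ A \ D, τ (insert a D) = A := by
    intro a ha
    by_contra hne
    have hsub : τ (insert a D) ⊆ A := hA ▸ hτ.2.1 _ _ (insert_subset ha.1 hDA.subset)
    have hDeq := hD.eq_of_le ⟨hτ.2.2 _, hsub.ssubset_of_ne hne⟩
      ((subset_insert a D).trans (hτ.1 _))
    exact ha.2 (hDeq ▸ hτ.1 _ (mem_insert a D))
  obtain ⟨a, ha⟩ := nonempty_of_ssubset hDA
  have hD_eq : D = A \ {a} := by
    ext b
    refine ⟨fun hb ↦ ⟨hDA.subset hb, ne_of_mem_of_not_mem hb ha.2⟩, fun hb ↦ ?_⟩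
    by_contra hbD
    exact hae D b a hb.2 (by rwa [hDcl]) (by rw [hDcl]; exact ha.2)
      (hgen a ha ▸ hb.1) (hgen b ⟨hb.1, hbD⟩ ▸ ha.1)
  exact ⟨a, ⟨ha.1, fun haC ↦ ha.2 (hCD haC)⟩, hD_eq ▸ hDcl⟩

theorem interStable [Finite E] (hτ : IsClosureOp τ) (hae : AntiExchange τ) :
    InterStable fun X Y : Set E ↦ τ X = τ Y := by
  intro X Y hXY
  by_contra hne
  have hsub : τ (X ∩ Y) ⊂ τ X := (hτ.2.1 _ _ inter_subset_left).ssubset_of_ne (Ne.symm hne)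
  obtain ⟨a, ⟨haA, haC⟩, hdel⟩ :=
    hτ.exists_closure_diff_singleton_eq hae (hτ.2.2 _) (hτ.2.2 _) hsub
  exact haC (hτ.1 _ ⟨hτ.mem_of_closure_eq haA hdel rfl, hτ.mem_of_closure_eq haA hdel hXY.symm⟩)

end IsClosureOp

section CospanningClasses

variable {R : Set E → Set E → Prop}

def classSup (R : Set E → Set E → Prop) (X : Set E) : Set E := ⋃₀ {Y | R X Y}

def classInf (R : Set E → Set E → Prop) (X : Set E) : Set E := ⋂₀ {Y | R X Y}

theorem subset_classSup {X Y : Set E} (h : R X Y) : Y ⊆ classSup R X :=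
  subset_sUnion_of_mem h

theorem classInf_subset {X Y : Set E} (h : R X Y) : classInf R X ⊆ Y :=
  sInter_subset_of_mem h

theorem classSup_congr (hR : Equivalence R) {X Y : Set E} (h : R X Y) :
    classSup R X = classSup R Y := by
  have hclass : {W | R X W} = {W | R Y W} :=
    ext fun _ ↦ ⟨hR.trans (hR.symm h), hR.trans h⟩
  rw [classSup, classSup, hclass]

theorem rel_classSup [Finite E] (hR : Equivalence R) (h1 : UnionStable R) (X : Set E) :
    R X (classSup R X) := by
  have hsup : SupClosed {Y | R X Y} :=
    fun _ hY _ hZ ↦ hR.trans hY (h1 _ _ (hR.trans (hR.symm hY) hZ))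
  exact hsup.sSup_mem_of_nonempty (toFinite _) ⟨X, hR.refl X⟩ subset_rfl

theorem rel_classInf [Finite E] (hR : Equivalence R) (h3 : InterStable R) (X : Set E) :
    R X (classInf R X) := by
  have hinf : InfClosed {Y | R X Y} :=
    fun _ hY _ hZ ↦ hR.trans hY (h3 _ _ (hR.trans (hR.symm hY) hZ))
  exact hinf.sInf_mem_of_nonempty (toFinite _) ⟨X, hR.refl X⟩ subset_rfl

theorem classSup_eq_classSup_iff [Finite E] (hR : Equivalence R) (h1 : UnionStable R)
    {X Y : Set E} : classSup R X = classSup R Y ↔ R X Y :=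
  ⟨fun h ↦ hR.trans (rel_classSup hR h1 X) (h ▸ hR.symm (rel_classSup hR h1 Y)),
    classSup_congr hR⟩

theorem classSup_classSup [Finite E] (hR : Equivalence R) (h1 : UnionStable R) (X : Set E) :
    classSup R (classSup R X) = classSup R X :=
  (classSup_congr hR (rel_classSup hR h1 X)).symm

theorem rel_iff_classInf_subset_subset_classSup [Finite E] (hR : Equivalence R)
    (h1 : UnionStable R) (h2 : OrdConnectedClasses R) (h3 : InterStable R) {X Y : Set E} :
    R X Y ↔ classInf R X ⊆ Y ∧ Y ⊆ classSup R X := by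
  refine ⟨fun h ↦ ⟨classInf_subset h, subset_classSup h⟩, fun ⟨hinf, hsup⟩ ↦ ?_⟩
  have hInfSup : R (classInf R X) (classSup R X) :=
    hR.trans (hR.symm (rel_classInf hR h3 X)) (rel_classSup hR h1 X)
  exact hR.trans (rel_classInf hR h3 X) (h2 _ _ _ hinf hsup hInfSup)

theorem classSup_diff_singleton [Finite E] (hR : Equivalence R) (h1 : UnionStable R)
    (h2 : OrdConnectedClasses R) (h3 : InterStable R) (h4 : ExtremeDeletionClosed R)
    {C : Set E} (hC : classSup R C = C) {x : E} (hx : x ∈ classInf R C) :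
    classSup R (C \ {x}) = C \ {x} := by
  have hxC : x ∈ C := classInf_subset (hR.refl C) hx
  have hCclosed : ∀ z ∉ C, ¬ R C (insert z C) :=
    fun z hz hRz ↦ hz (hC ▸ subset_classSup hRz (mem_insert z C))
  have hxExtreme : ¬ R C (C \ {x}) := fun h ↦ (classInf_subset h hx).2 rfl
  refine subset_antisymm (fun w hw ↦ ?_) (subset_classSup (hR.refl _))
  have hRw : R (C \ {x}) (insert w (C \ {x})) :=
    (rel_iff_classInf_subset_subset_classSup hR h1 h2 h3).2
      ⟨(classInf_subset (hR.refl _)).trans (subset_insert _ _),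
        insert_subset hw (subset_classSup (hR.refl _))⟩
  by_cases hwC : w ∈ C
  · refine ⟨hwC, fun hwx ↦ hxExtreme (hR.symm ?_)⟩
    rwa [eq_of_mem_singleton hwx, insert_sdiff_singleton, insert_eq_of_mem hxC] at hRw
  · exact (h4 C x w hxC hwC hCclosed hxExtreme hRw).elim

theorem classSup_subset_of_subset [Finite E] (hR : Equivalence R) (h1 : UnionStable R)
    (h2 : OrdConnectedClasses R) (h3 : InterStable R) (h4 : ExtremeDeletionClosed R)
    {C Z : Set E} (hC : classSup R C = C) (hZC : Z ⊆ C) : classSup R Z ⊆ C := by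
  induction C using WellFoundedLT.induction generalizing Z with
  | _ C ih =>
    by_cases hZ : classInf R C ⊆ Z
    · have hRZ : R C Z :=
        (rel_iff_classInf_subset_subset_classSup hR h1 h2 h3).2 ⟨hZ, hC.symm ▸ hZC⟩
      rw [← classSup_congr hR hRZ, hC]
    · obtain ⟨x, hx, hxZ⟩ := not_subset.1 hZ
      have hxC : x ∈ C := classInf_subset (hR.refl C) hx
      have hdel := classSup_diff_singleton hR h1 h2 h3 h4 hC hx
      exact (ih _ (sdiff_singleton_ssubset.2 hxC) hdel (subset_sdiff_singleton hZC hxZ)).trans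
        sdiff_subset

theorem isClosureOp_classSup [Finite E] (hR : Equivalence R) (h1 : UnionStable R)
    (h2 : OrdConnectedClasses R) (h3 : InterStable R) (h4 : ExtremeDeletionClosed R) :
    IsClosureOp (classSup R) :=
  ⟨fun X ↦ subset_classSup (hR.refl X),
    fun _ Y hXY ↦ classSup_subset_of_subset hR h1 h2 h3 h4 (classSup_classSup hR h1 Y)
      (hXY.trans (subset_classSup (hR.refl Y))),
    classSup_classSup hR h1⟩

theorem antiExchange_classSup [Finite E] (hR : Equivalence R) (h1 : UnionStable R)
    (h2 : OrdConnectedClasses R) (h3 : InterStable R) (h4 : ExtremeDeletionClosed R) :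
    AntiExchange (classSup R) := by
  have hτ := isClosureOp_classSup hR h1 h2 h3 h4
  intro X p q hpq hpX _ hp hq
  have hRpq : R (insert p X) (insert q X) :=
    (classSup_eq_classSup_iff hR h1).1 <| subset_antisymm
      (hτ.closure_subset_closure (insert_subset hp ((subset_insert q X).trans (hτ.1 _))))
      (hτ.closure_subset_closure (insert_subset hq ((subset_insert p X).trans (hτ.1 _))))
  have hInfX : classInf R (insert p X) ⊆ X := by
    intro v hv
    obtain rfl | hvX := classInf_subset (hR.refl _) hv
    · exact (classInf_subset hRpq hv).resolve_left hpq
    · exact hvX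
  have hRX : R (insert p X) X := (rel_iff_classInf_subset_subset_classSup hR h1 h2 h3).2
    ⟨hInfX, (subset_insert p X).trans (hτ.1 _)⟩
  exact hpX (classSup_congr hR hRX ▸ hτ.1 _ (mem_insert p X))

end CospanningClasses

end

theorem stmt11 {E : Type*} [Fintype E] (R : Set E → Set E → Prop) (hR : Equivalence R) :
    (∃ τ : Set E → Set E, IsClosureOp τ ∧ AntiExchange τ ∧ ∀ X Y, R X Y ↔ τ X = τ Y) ↔
      ((∀ X Y : Set E, R X Y → R X (X ∪ Y)) ∧
       (∀ X Y Z : Set E, X ⊆ Y → Y ⊆ Z → R X Z → R X Y) ∧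
       (∀ X Y : Set E, R X Y → R X (X ∩ Y)) ∧
       (∀ (X : Set E) (x y : E), x ∈ X → y ∉ X →
         (∀ z ∉ X, ¬ R X (insert z X)) → ¬ R X (X \ {x}) →
         ¬ R (X \ {x}) (insert y (X \ {x})))) := by
  constructor
  · rintro ⟨τ, hτ, hae, hRτ⟩
    obtain rfl : R = fun X Y ↦ τ X = τ Y := funext₂ fun X Y ↦ propext (hRτ X Y)
    exact ⟨hτ.unionStable, hτ.ordConnectedClasses, hτ.interStable hae, hτ.extremeDeletionClosed⟩
  · rintro ⟨h1, h2, h3, h4⟩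
    exact ⟨classSup R, isClosureOp_classSup hR h1 h2 h3 h4, antiExchange_classSup hR h1 h2 h3 h4,
      fun X Y ↦ (classSup_eq_classSup_iff hR h1).symm⟩
end

section
/- Let (E, F) be a greedoid with rank function r(X) = max{|A| : A ⊆ X, A ∈ F} and rank closure operator σ(X) = {x ∈ E : r(X ∪ {x}) = r(X)}. Then F = {X ⊆ E : σ(Y) ≠ σ(X) for every proper subset Y ⊂ X}; that is, the feasible sets of the greedoid are exactly the inclusion-minimal generators (bases) with respect to σ. -/
/-!
Fix a feasible set `A ⊆ X` of maximum size `r X`. Augmenting `A` by an element of `X` would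
contradict maximality, so an element `x` raises the rank of `X` exactly when `x ∉ A` and
`A ∪ {x}` is feasible. This criterion depends only on `A`, and `A` is also of maximum size inside
itself, hence `σ A = σ X`. So a set that is not feasible has the proper subset `A` with the same
closure. Conversely, if `X` is feasible and `Y ⊂ X`, augmenting a maximum feasible subset `A` of
`Y` from `X` gives some `x ∈ X ⊆ σ X` with `x ∉ σ A = σ Y`.
-/

/-- A greedoid on `E`: `∅` is feasible and larger feasible sets augment smaller ones. -/
def IsGreedoid {E : Type*} (F : Set (Set E)) : Prop :=
  ∅ ∈ F ∧ ∀ X ∈ F, ∀ Y ∈ F, Y.ncard < X.ncard → ∃ x ∈ X \ Y, insert x Y ∈ F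

/-- The rank function of a set system: `r X = max {|A| : A ⊆ X, A ∈ F}`. -/
noncomputable def greedoidRank {E : Type*} (F : Set (Set E)) (X : Set E) : ℕ :=
  sSup {n | ∃ A ∈ F, A ⊆ X ∧ A.ncard = n}

/-- The rank closure operator `σ X = {x : r (X ∪ {x}) = r X}`. -/
noncomputable def rankClosure {E : Type*} (F : Set (Set E)) (X : Set E) : Set E :=
  {x | greedoidRank F (insert x X) = greedoidRank F X}

section GreedoidRank

variable {E : Type*} {F : Set (Set E)} {A X : Set E} {x : E}

theorem subset_rankClosure : X ⊆ rankClosure F X := fun x hx => by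
  simp [rankClosure, Set.insert_eq_of_mem hx]

variable [Finite E]

theorem bddAbove_feasible_ncard (X : Set E) :
    BddAbove {n | ∃ A ∈ F, A ⊆ X ∧ A.ncard = n} := by
  refine ⟨(Set.univ : Set E).ncard, ?_⟩
  rintro n ⟨A, -, -, rfl⟩
  exact Set.ncard_le_ncard (Set.subset_univ A)

theorem ncard_le_greedoidRank (hA : A ∈ F) (hAX : A ⊆ X) : A.ncard ≤ greedoidRank F X :=
  le_csSup (bddAbove_feasible_ncard X) ⟨A, hA, hAX, rfl⟩

theorem exists_mem_subset_ncard_eq_greedoidRank (hF : ∅ ∈ F) (X : Set E) :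
    ∃ A ∈ F, A ⊆ X ∧ A.ncard = greedoidRank F X :=
  Nat.sSup_mem (s := {n | ∃ A ∈ F, A ⊆ X ∧ A.ncard = n})
    ⟨0, ∅, hF, Set.empty_subset X, Set.ncard_empty E⟩ (bddAbove_feasible_ncard X)

theorem not_mem_rankClosure_iff_of_ncard_eq_greedoidRank (hF : IsGreedoid F) (hA : A ∈ F)
    (hAX : A ⊆ X) (hAr : A.ncard = greedoidRank F X) :
    x ∉ rankClosure F X ↔ x ∉ A ∧ insert x A ∈ F := by
  simp only [rankClosure, Set.mem_ofPred_eq]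
  constructor
  · intro hx
    obtain ⟨B, hB, hBX, hBr⟩ := exists_mem_subset_ncard_eq_greedoidRank hF.1 (insert x X)
    have hAB : A.ncard < B.ncard :=
      lt_of_le_of_ne (hBr ▸ ncard_le_greedoidRank hA (hAX.trans (Set.subset_insert x X)))
        (by omega)
    obtain ⟨b, ⟨hbB, hbA⟩, hbA'⟩ := hF.2 B hB A hA hAB
    rcases Set.mem_insert_iff.mp (hBX hbB) with rfl | hbX
    · exact ⟨hbA, hbA'⟩
    · have := ncard_le_greedoidRank hbA' (Set.insert_subset hbX hAX)
      rw [Set.ncard_insert_of_notMem hbA] at this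
      omega
  · rintro ⟨hxA, hxA'⟩ hx
    have := ncard_le_greedoidRank hxA' (Set.insert_subset_insert hAX)
    rw [Set.ncard_insert_of_notMem hxA] at this
    omega

theorem rankClosure_eq_of_ncard_eq_greedoidRank (hF : IsGreedoid F) (hA : A ∈ F)
    (hAX : A ⊆ X) (hAr : A.ncard = greedoidRank F X) :
    rankClosure F A = rankClosure F X := by
  have hAA : A.ncard = greedoidRank F A := by
    obtain ⟨B, hB, hBA, hBr⟩ := exists_mem_subset_ncard_eq_greedoidRank hF.1 A
    have hBX := ncard_le_greedoidRank hB (hBA.trans hAX)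
    have hAA_le := ncard_le_greedoidRank hA (subset_refl A)
    omega
  ext x
  rw [← not_iff_not, not_mem_rankClosure_iff_of_ncard_eq_greedoidRank hF hA subset_rfl hAA,
    not_mem_rankClosure_iff_of_ncard_eq_greedoidRank hF hA hAX hAr]

end GreedoidRank

theorem stmt12 {E : Type*} [Fintype E] (F : Set (Set E)) (hF : IsGreedoid F) :
    F = {X : Set E | ∀ Y : Set E, Y ⊂ X → rankClosure F Y ≠ rankClosure F X} := by
  ext X
  constructor
  · intro hX Y hYX hσ
    obtain ⟨A, hA, hAY, hAr⟩ := exists_mem_subset_ncard_eq_greedoidRank hF.1 Y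
    have hAX : A.ncard < X.ncard :=
      (Set.ncard_le_ncard hAY).trans_lt (Set.ncard_lt_ncard hYX)
    obtain ⟨x, ⟨hxX, hxA⟩, hxA'⟩ := hF.2 X hX A hA hAX
    have hxσ : x ∉ rankClosure F Y :=
      (not_mem_rankClosure_iff_of_ncard_eq_greedoidRank hF hA hAY hAr).2 ⟨hxA, hxA'⟩
    exact hxσ (hσ ▸ subset_rankClosure hxX)
  · intro hmin
    obtain ⟨A, hA, hAX, hAr⟩ := exists_mem_subset_ncard_eq_greedoidRank hF.1 X
    obtain rfl : A = X := by_contra fun hne =>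
      hmin A (hAX.ssubset_of_ne hne) (rankClosure_eq_of_ncard_eq_greedoidRank hF hA hAX hAr)
    exact hA
end

section
/- Let E be a finite set and R an equivalence relation on 2^E satisfying (R1) (X, Y) ∈ R implies (X, X ∪ Y) ∈ R, and (R2) X ⊆ Y ⊆ Z and (X, Z) ∈ R imply (X, Y) ∈ R. Let F = {X ⊆ E : (X, Y) ∉ R for every proper subset Y ⊂ X}. Then R satisfies (R4): for all X ⊆ E and distinct x, y ∉ X, if (X ∪ {y}, X ∪ {x, y}) ∈ R but (X ∪ {x}, X ∪ {x, y}) ∉ R, then there exists z ∈ X ∪ {x} with (X ∪ {x} \ {z}, X ∪ {x}) ∈ R — if and only if R satisfies the augmentation property: for every A ∈ F and every a ∈ E \ A with (A, A ∪ {a}) ∉ R, one has A ∪ {a} ∈ F. -/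
/-!
A set `S` is minimal in its class as soon as no `S \ {w}` is equivalent to `S`: by (R2), a smaller
equivalent set `Y ⊂ S` makes every `S \ {w}` with `Y ⊆ S \ {w}` equivalent to `S` as well.

(R4) ⇒ augmentation: if `A ∪ {a}` were not minimal, some `w` could be dropped from it; `w = a` is
excluded by `¬ R A (A ∪ {a})`, and for `w ∈ A` (R4) applied to `A \ {w}`, `x = w`, `y = a` shows that
`A` itself is not minimal.

Augmentation ⇒ (R4): if no `z` can be dropped from `X ∪ {x}`, this set is minimal, hence so is
`X ∪ {x, y}`, which contradicts `R (X ∪ {y}) (X ∪ {x, y})`.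
-/

namespace SetEquivalence

variable {E : Type*} {R : Set E → Set E → Prop}

def IsMinimalInClass (R : Set E → Set E → Prop) (X : Set E) : Prop :=
  ∀ Y : Set E, Y ⊂ X → ¬ R X Y

def Augmentation (R : Set E → Set E → Prop) : Prop :=
  ∀ A, IsMinimalInClass R A → ∀ a ∉ A, ¬ R A (insert a A) → IsMinimalInClass R (insert a A)

def PropertyR4 (R : Set E → Set E → Prop) : Prop :=
  ∀ (X : Set E) (x y : E), x ≠ y → x ∉ X → y ∉ X →
    R (insert y X) (insert x (insert y X)) →
    ¬ R (insert x X) (insert x (insert y X)) →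
    ∃ z ∈ insert x X, R ((insert x X) \ {z}) (insert x X)

variable (hR : Equivalence R) (hR2 : ∀ X Y Z : Set E, X ⊆ Y → Y ⊆ Z → R X Z → R X Y)
include hR hR2

theorem isMinimalInClass_iff {S : Set E} :
    IsMinimalInClass R S ↔ ∀ w ∈ S, ¬ R (S \ {w}) S := by
  refine ⟨fun h w hw hRw ↦ h _ (Set.sdiff_singleton_ssubset.2 hw) (hR.symm hRw), ?_⟩
  intro h Y hYS hRSY
  obtain ⟨w, hwS, hwY⟩ := Set.exists_of_ssubset hYS
  have hRYw : R Y (S \ {w}) :=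
    hR2 Y _ S (Set.subset_sdiff_singleton hYS.subset hwY) Set.sdiff_subset (hR.symm hRSY)
  exact h w hwS (hR.symm (hR.trans hRSY hRYw))

theorem augmentation_of_propertyR4 (h4 : PropertyR4 R) : Augmentation R := by
  intro A hA a haA hRA
  rw [isMinimalInClass_iff hR hR2] at hA ⊢
  rintro w (rfl | hwA) hRw
  · rw [Set.insert_sdiff_self_of_notMem haA] at hRw
    exact hRA hRw
  · have hwa : w ≠ a := ne_of_mem_of_not_mem hwA haA
    have hA' : insert w (A \ {w}) = A := Set.insert_sdiff_self_of_mem hwA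
    have hAa : insert w (insert a (A \ {w})) = insert a A := by rw [Set.insert_comm, hA']
    obtain ⟨z, hz, hRz⟩ := h4 (A \ {w}) w a hwa (by simp) (fun h ↦ haA h.1)
      (by rwa [hAa, Set.insert_sdiff_singleton_comm hwa.symm])
      (by rwa [hA', hAa])
    rw [hA'] at hz hRz
    exact hA z hz hRz

theorem propertyR4_of_augmentation (haug : Augmentation R) : PropertyR4 R := by
  intro X x y hxy hxX hyX hRy hRx
  by_contra! hc
  have hmin : IsMinimalInClass R (insert x X) := (isMinimalInClass_iff hR hR2).2 hc
  have hyx : y ∉ insert x X := by simp [hxy.symm, hyX]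
  rw [Set.insert_comm] at hRx
  have hmin' := (isMinimalInClass_iff hR hR2).1 (haug _ hmin y hyx hRx) x (by simp)
  rw [Set.insert_comm, Set.insert_sdiff_self_of_notMem (by simp [hxy, hxX])] at hmin'
  exact hmin' hRy

end SetEquivalence

open SetEquivalence in
theorem stmt13_general {E : Type*} (R : Set E → Set E → Prop) (hR : Equivalence R)
    (hR2 : ∀ X Y Z : Set E, X ⊆ Y → Y ⊆ Z → R X Z → R X Y)
    (F : Set (Set E)) (hF : F = {X : Set E | ∀ Y : Set E, Y ⊂ X → ¬ R X Y}) :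
    (∀ (X : Set E) (x y : E), x ≠ y → x ∉ X → y ∉ X →
        R (insert y X) (insert x (insert y X)) →
        ¬ R (insert x X) (insert x (insert y X)) →
        ∃ z ∈ insert x X, R ((insert x X) \ {z}) (insert x X)) ↔
      (∀ A ∈ F, ∀ a ∉ A, ¬ R A (insert a A) → insert a A ∈ F) := by
  subst hF
  exact ⟨augmentation_of_propertyR4 hR hR2, propertyR4_of_augmentation hR hR2⟩

theorem stmt13 {E : Type*} [Fintype E] (R : Set E → Set E → Prop) (hR : Equivalence R)
    (hR1 : ∀ X Y : Set E, R X Y → R X (X ∪ Y))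
    (hR2 : ∀ X Y Z : Set E, X ⊆ Y → Y ⊆ Z → R X Z → R X Y)
    (F : Set (Set E)) (hF : F = {X : Set E | ∀ Y : Set E, Y ⊂ X → ¬ R X Y}) :
    (∀ (X : Set E) (x y : E), x ≠ y → x ∉ X → y ∉ X →
        R (insert y X) (insert x (insert y X)) →
        ¬ R (insert x X) (insert x (insert y X)) →
        ∃ z ∈ insert x X, R ((insert x X) \ {z}) (insert x X)) ↔
      (∀ A ∈ F, ∀ a ∉ A, ¬ R A (insert a A) → insert a A ∈ F) :=
  stmt13_general R hR hR2 F hF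
end

section
/- Let (E, F) be a greedoid with rank closure operator σ. Then (E, F) is an antimatroid (i.e., F is closed under union) if and only if (E, σ) is uniquely generated, meaning every X ⊆ E has a unique inclusion-minimal set B with σ(B) = σ(X). -/
/-!
For a feasible basis `K` of `X` (a feasible subset of maximal size `r X`), augmentation shows
`σ X = K ∪ {x | insert x K ∉ F}`, so `σ X = σ K`.

In an antimatroid, two feasible sets with the same closure are equal (their union is feasible and
lies in the common closure), so `X` and `Y` with `σ X = σ Y` share a feasible basis, which then lies
in `X ∩ Y`; hence `σ (X ∩ Y) = σ X`, and two minimal generators of `X` contain each other.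

Conversely, if `F` is not union-closed, take feasible `A`, `B` with `A ∪ B ∉ F`, first maximizing
`|A ∪ B|` and then `|A ∩ B|`. Augmenting `A` or `B` by one element then contradicts one of the two
maximalities, which forces `σ A = σ B`. The unique minimal generator `C` of `σ A` lies in both
`A` and `B`, hence `|C| < |A|`, while `A ⊆ σ C` with `A` feasible forces `|A| ≤ r C ≤ |C|`.
-/

namespace Greedoid

variable {E : Type*} {F : Set (Set E)} {X Y K : Set E}

def IsFeasibleBasis (F : Set (Set E)) (X K : Set E) : Prop :=
  K ∈ F ∧ K ⊆ X ∧ K.ncard = greedoidRank F X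

lemma subset_rankClosure (X : Set E) : X ⊆ rankClosure F X := fun x hx => by
  simp [rankClosure, Set.insert_eq_of_mem hx]

section Finite

variable [Finite E]

lemma bddAbove_ncard_feasible_subsets (X : Set E) :
    BddAbove {n | ∃ A ∈ F, A ⊆ X ∧ A.ncard = n} :=
  ⟨Nat.card E, by rintro n ⟨A, -, -, rfl⟩; exact Set.ncard_le_card A⟩

lemma ncard_le_greedoidRank {A : Set E} (hA : A ∈ F) (hAX : A ⊆ X) :
    A.ncard ≤ greedoidRank F X :=
  le_csSup (bddAbove_ncard_feasible_subsets X) ⟨A, hA, hAX, rfl⟩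

lemma exists_isFeasibleBasis (hF : IsGreedoid F) (X : Set E) : ∃ K, IsFeasibleBasis F X K := by
  obtain ⟨K, hK⟩ : greedoidRank F X ∈ {n | ∃ A ∈ F, A ⊆ X ∧ A.ncard = n} :=
    Nat.sSup_mem ⟨0, ∅, hF.1, Set.empty_subset X, Set.ncard_empty E⟩
      (bddAbove_ncard_feasible_subsets X)
  exact ⟨K, hK⟩

lemma greedoidRank_le_ncard (hF : IsGreedoid F) (X : Set E) : greedoidRank F X ≤ X.ncard := by
  obtain ⟨K, -, hKX, hK⟩ := exists_isFeasibleBasis hF X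
  exact hK ▸ Set.ncard_le_ncard hKX

lemma greedoidRank_mono (hF : IsGreedoid F) (h : X ⊆ Y) :
    greedoidRank F X ≤ greedoidRank F Y := by
  obtain ⟨K, hKF, hKX, hK⟩ := exists_isFeasibleBasis hF X
  exact hK ▸ ncard_le_greedoidRank hKF (hKX.trans h)

lemma isFeasibleBasis_self (hF : IsGreedoid F) {A : Set E} (hA : A ∈ F) :
    IsFeasibleBasis F A A :=
  ⟨hA, subset_rfl, le_antisymm (ncard_le_greedoidRank hA subset_rfl) (greedoidRank_le_ncard hF A)⟩

lemma IsFeasibleBasis.anti (hF : IsGreedoid F) (hK : IsFeasibleBasis F X K) (hKY : K ⊆ Y)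
    (hYX : Y ⊆ X) : IsFeasibleBasis F Y K :=
  ⟨hK.1, hKY, le_antisymm (ncard_le_greedoidRank hK.1 hKY) (hK.2.2 ▸ greedoidRank_mono hF hYX)⟩

lemma IsFeasibleBasis.notMem_rankClosure_iff (hF : IsGreedoid F) (hK : IsFeasibleBasis F X K)
    {x : E} : x ∉ rankClosure F X ↔ x ∉ K ∧ insert x K ∈ F := by
  obtain ⟨hKF, hKX, hKr⟩ := hK
  constructor
  · intro hx
    have hlt : greedoidRank F X < greedoidRank F (insert x X) :=
      (greedoidRank_mono hF (Set.subset_insert x X)).lt_of_ne (Ne.symm hx)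
    obtain ⟨D, hDF, hDX, hDr⟩ := exists_isFeasibleBasis hF (insert x X)
    obtain ⟨y, ⟨hyD, hyK⟩, hyKF⟩ := hF.2 D hDF K hKF (by omega)
    obtain rfl | hyX := hDX hyD
    · exact ⟨hyK, hyKF⟩
    · have := ncard_le_greedoidRank hyKF (Set.insert_subset hyX hKX)
      rw [Set.ncard_insert_of_notMem hyK] at this
      omega
  · rintro ⟨hxK, hxKF⟩ (hx : greedoidRank F (insert x X) = greedoidRank F X)
    have := ncard_le_greedoidRank hxKF (Set.insert_subset_insert hKX)
    rw [Set.ncard_insert_of_notMem hxK] at this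
    omega

lemma IsFeasibleBasis.rankClosure_eq (hF : IsGreedoid F) (hK : IsFeasibleBasis F X K) :
    rankClosure F X = rankClosure F K := by
  ext x
  rw [← not_iff_not, hK.notMem_rankClosure_iff hF,
    (isFeasibleBasis_self hF hK.1).notMem_rankClosure_iff hF]

lemma notMem_rankClosure_iff (hF : IsGreedoid F) {A : Set E} (hA : A ∈ F) {x : E} :
    x ∉ rankClosure F A ↔ x ∉ A ∧ insert x A ∈ F :=
  (isFeasibleBasis_self hF hA).notMem_rankClosure_iff hF

lemma ncard_le_greedoidRank_of_subset_rankClosure (hF : IsGreedoid F) {A : Set E} (hA : A ∈ F)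
    (hAX : A ⊆ rankClosure F X) : A.ncard ≤ greedoidRank F X := by
  obtain ⟨K, hK⟩ := exists_isFeasibleBasis hF X
  by_contra! hlt
  obtain ⟨y, ⟨hyA, hyK⟩, hyKF⟩ := hF.2 A hA K hK.1 (hK.2.2 ▸ hlt)
  exact (hK.notMem_rankClosure_iff hF).2 ⟨hyK, hyKF⟩ (hAX hyA)

lemma IsFeasibleBasis.subset_of_rankClosure_eq (hF : IsGreedoid F)
    (hU : ∀ A ∈ F, ∀ B ∈ F, A ∪ B ∈ F) {K' : Set E}
    (hK : IsFeasibleBasis F X K) (hK' : IsFeasibleBasis F Y K')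
    (h : rankClosure F X = rankClosure F Y) : K' ⊆ K := by
  have hsub : K ∪ K' ⊆ rankClosure F X :=
    Set.union_subset (hK.2.1.trans (subset_rankClosure X))
      (h ▸ hK'.2.1.trans (subset_rankClosure Y))
  have hle := ncard_le_greedoidRank_of_subset_rankClosure hF (hU K hK.1 K' hK'.1) hsub
  rw [← hK.2.2] at hle
  exact Set.eq_of_subset_of_ncard_le Set.subset_union_left hle ▸ Set.subset_union_right

lemma rankClosure_inter_eq_of_rankClosure_eq (hF : IsGreedoid F)
    (hU : ∀ A ∈ F, ∀ B ∈ F, A ∪ B ∈ F)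
    (h : rankClosure F X = rankClosure F Y) : rankClosure F (X ∩ Y) = rankClosure F X := by
  obtain ⟨K, hK⟩ := exists_isFeasibleBasis hF X
  obtain ⟨K', hK'⟩ := exists_isFeasibleBasis hF Y
  have hKK' : K = K' := (hK'.subset_of_rankClosure_eq hF hU hK h.symm).antisymm
    (hK.subset_of_rankClosure_eq hF hU hK' h)
  have hKXY : IsFeasibleBasis F (X ∩ Y) K :=
    hK.anti hF (Set.subset_inter hK.2.1 (hKK' ▸ hK'.2.1)) Set.inter_subset_left
  rw [hKXY.rankClosure_eq hF, hK.rankClosure_eq hF]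

lemma existsUnique_minimal_rankClosure_eq_of_union_mem (hF : IsGreedoid F)
    (hU : ∀ A ∈ F, ∀ B ∈ F, A ∪ B ∈ F) (X : Set E) :
    ∃! B, Minimal (fun B => rankClosure F B = rankClosure F X) B := by
  obtain ⟨B, -, hB⟩ := exists_minimal_le_of_wellFoundedLT
    (fun B => rankClosure F B = rankClosure F X) X rfl
  refine ⟨B, hB, fun B' hB' => ?_⟩
  have hinter := rankClosure_inter_eq_of_rankClosure_eq hF hU (hB'.1.trans hB.1.symm)
  have h₁ := hB'.eq_of_subset (hinter.trans hB'.1) Set.inter_subset_left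
  have h₂ := hB.eq_of_subset (hinter.trans hB'.1) Set.inter_subset_right
  exact h₁.symm.trans h₂

end Finite

section NonUnionPair

variable {A B : Set E}

noncomputable def unionInterCard (A B : Set E) : ℕ ×ₗ ℕ := toLex ((A ∪ B).ncard, (A ∩ B).ncard)

lemma unionInterCard_comm (A B : Set E) : unionInterCard A B = unionInterCard B A := by
  rw [unionInterCard, unionInterCard, Set.union_comm, Set.inter_comm]

def IsMaxNonUnionPair (F : Set (Set E)) (A B : Set E) : Prop :=
  A ∈ F ∧ B ∈ F ∧ A ∪ B ∉ F ∧
    ∀ A' ∈ F, ∀ B' ∈ F, A' ∪ B' ∉ F → unionInterCard A' B' ≤ unionInterCard A B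

lemma IsMaxNonUnionPair.symm (h : IsMaxNonUnionPair F A B) : IsMaxNonUnionPair F B A :=
  ⟨h.2.1, h.1, Set.union_comm A B ▸ h.2.2.1,
    fun A' hA' B' hB' hA'B' => unionInterCard_comm A B ▸ h.2.2.2 A' hA' B' hB' hA'B'⟩

variable [Finite E]

lemma exists_isMaxNonUnionPair (h : ¬ ∀ A ∈ F, ∀ B ∈ F, A ∪ B ∈ F) :
    ∃ A B, IsMaxNonUnionPair F A B := by
  push Not at h
  obtain ⟨A, hA, B, hB, hAB⟩ := h
  obtain ⟨⟨A, B⟩, ⟨hA, hB, hAB⟩, hmax⟩ :=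
    Set.exists_max_image {p : Set E × Set E | p.1 ∈ F ∧ p.2 ∈ F ∧ p.1 ∪ p.2 ∉ F}
      (fun p => unionInterCard p.1 p.2) (Set.toFinite _) ⟨(A, B), hA, hB, hAB⟩
  exact ⟨A, B, hA, hB, hAB, fun A' hA' B' hB' hA'B' => hmax (A', B') ⟨hA', hB', hA'B'⟩⟩

lemma IsMaxNonUnionPair.insert_notMem (h : IsMaxNonUnionPair F A B) {y : E} (hyB : y ∈ B)
    (hyA : y ∉ A) : insert y A ∉ F := by
  intro hyAF
  have hunion : insert y A ∪ B = A ∪ B := by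
    rw [Set.insert_union, Set.insert_eq_of_mem (Set.mem_union_right A hyB)]
  have hle := h.2.2.2 _ hyAF B h.2.1 (hunion ▸ h.2.2.1)
  rw [unionInterCard, unionInterCard, hunion, Set.insert_inter_of_mem hyB,
    Set.ncard_insert_of_notMem (fun hy => hyA hy.1), Prod.Lex.toLex_le_toLex] at hle
  omega

lemma IsMaxNonUnionPair.rankClosure_subset (hF : IsGreedoid F) (h : IsMaxNonUnionPair F A B) :
    rankClosure F A ⊆ rankClosure F B := by
  intro z hzA
  by_contra hzB
  obtain ⟨hzB, hzBF⟩ := (notMem_rankClosure_iff hF h.2.1).1 hzB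
  by_cases hzA' : z ∈ A
  · exact h.symm.insert_notMem hzA' hzB hzBF
  have hzAB : z ∉ A ∪ B := fun hz => hz.elim hzA' hzB
  -- `A ∪ insert z B` is a strictly larger union, so it cannot be infeasible
  have hunion : insert z (A ∪ B) ∈ F := by
    by_contra hbad
    have hle := h.2.2.2 A h.1 (insert z B) hzBF (by rwa [Set.union_insert])
    rw [unionInterCard, unionInterCard, Set.union_insert, Set.ncard_insert_of_notMem hzAB,
      Prod.Lex.toLex_le_toLex] at hle
    omega
  have hAsub : A ⊂ insert z (A ∪ B) :=
    (Set.ssubset_iff_of_subset (Set.subset_union_left.trans (Set.subset_insert z _))).2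
      ⟨z, Set.mem_insert z _, hzA'⟩
  obtain ⟨y, ⟨hy, hyA⟩, hyAF⟩ := hF.2 _ hunion A h.1 (Set.ncard_lt_ncard hAsub)
  rcases hy with rfl | hyA' | hyB
  · exact (notMem_rankClosure_iff hF h.1).2 ⟨hyA, hyAF⟩ hzA
  · exact hyA hyA'
  · exact h.insert_notMem hyB hyA hyAF

lemma union_mem_of_existsUnique_minimal_rankClosure_eq (hF : IsGreedoid F)
    (hUG : ∀ X, ∃! B, Minimal (fun B => rankClosure F B = rankClosure F X) B) :
    ∀ A ∈ F, ∀ B ∈ F, A ∪ B ∈ F := by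
  by_contra hnot
  obtain ⟨A, B, h⟩ := exists_isMaxNonUnionPair hnot
  have hσ : rankClosure F A = rankClosure F B :=
    (h.rankClosure_subset hF).antisymm (h.symm.rankClosure_subset hF)
  obtain ⟨C, hCA, hC⟩ :=
    exists_minimal_le_of_wellFoundedLT (fun C => rankClosure F C = rankClosure F A) A rfl
  obtain ⟨C', hC'B, hC'⟩ :=
    exists_minimal_le_of_wellFoundedLT (fun C => rankClosure F C = rankClosure F A) B hσ.symm
  have hCB : C ⊆ B := (hUG A).unique hC hC' ▸ hC'B
  have hAB : ¬ A ⊆ B := fun hAB =>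
    h.2.2.1 (by rw [Set.union_eq_self_of_subset_left hAB]; exact h.2.1)
  have hCA : C ⊂ A := (Set.subset_inter hCA hCB).trans_ssubset (Set.inter_ssubset_left_iff.2 hAB)
  have hAC : A.ncard ≤ greedoidRank F C :=
    ncard_le_greedoidRank_of_subset_rankClosure hF h.1 (hC.1 ▸ subset_rankClosure A)
  have hCr := greedoidRank_le_ncard hF C
  have hCcard := Set.ncard_lt_ncard hCA
  omega

end NonUnionPair

end Greedoid

open Greedoid in
theorem stmt16 {E : Type*} [Fintype E] (F : Set (Set E)) (hF : IsGreedoid F) :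
    (∀ A ∈ F, ∀ B ∈ F, A ∪ B ∈ F) ↔
      (∀ X : Set E, ∃! B : Set E,
        rankClosure F B = rankClosure F X ∧
        ∀ C : Set E, C ⊂ B → rankClosure F C ≠ rankClosure F X) := by
  have hmin : ∀ X B, Minimal (fun B => rankClosure F B = rankClosure F X) B ↔
      rankClosure F B = rankClosure F X ∧ ∀ C, C ⊂ B → rankClosure F C ≠ rankClosure F X :=
    fun _ _ => Set.minimal_iff_forall_ssubset
  simp only [← hmin]
  exact ⟨fun hU => existsUnique_minimal_rankClosure_eq_of_union_mem hF hU,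
    union_mem_of_existsUnique_minimal_rankClosure_eq hF⟩
end

section
/- Let E be a finite set and R an equivalence relation on 2^E. Then R is the cospanning relation of a matroid on E (i.e., there exists a greedoid (E, F) whose family F is hereditary — Y ⊆ X ∈ F implies Y ∈ F — with rank closure operator σ such that (X, Y) ∈ R iff σ(X) = σ(Y)) if and only if R satisfies, for all X, Y, Z ⊆ E and distinct x, y ∉ X: (R1) (X, Y) ∈ R implies (X, X ∪ Y) ∈ R; (R2) X ⊆ Y ⊆ Z and (X, Z) ∈ R imply (X, Y) ∈ R; (R4) if (X ∪ {y}, X ∪ {x, y}) ∈ R but (X ∪ {x}, X ∪ {x, y}) ∉ R, then there exists z ∈ X ∪ {x} with (X ∪ {x} \ {z}, X ∪ {x}) ∈ R; and (R5) if (X, X \ {x}) ∉ R for every x ∈ X, then (X \ {x} \ {z}, X \ {x}) ∉ R for every x ∈ X and every z ∈ X \ {x}. -/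
/-!
A hereditary greedoid on a finite set is the family of independent sets of a matroid, and its
rank closure is the matroid closure. For the forward direction it therefore suffices to check the
axioms for the relation `cl X = cl Y` of a matroid; (R4) is the MacLane–Steinitz exchange
property, and (R5) holds because a set none of whose elements can be dropped without shrinking
its closure is independent.

Conversely, given the axioms, call a set irredundant if dropping any of its elements leaves its
`R`-class. By (R5) these sets form a hereditary family, and (R4) gives augmentation: if `A` spans
every element of a larger irredundant `B`, trading elements of `A \ B` for elements of `B` leads
to a contradiction. In the resulting matroid `e ∈ cl X` iff `R X (insert e X)`, and (R1), (R2)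
then identify `R` with the cospanning relation.
-/

open Set Matroid

/-- An equivalence relation satisfying the axioms (R1), (R2), (R4), (R5), in this order. -/
structure CospanningAxioms {E : Type*} (R : Set E → Set E → Prop) : Prop where
  equivalence : Equivalence R
  union_right : ∀ X Y : Set E, R X Y → R X (X ∪ Y)
  of_subset_of_subset : ∀ X Y Z : Set E, X ⊆ Y → Y ⊆ Z → R X Z → R X Y
  exchange : ∀ (X : Set E) (x y : E), x ≠ y → x ∉ X → y ∉ X →
    R (insert y X) (insert x (insert y X)) → ¬ R (insert x X) (insert x (insert y X)) →
    ∃ z ∈ insert x X, R ((insert x X) \ {z}) (insert x X)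
  not_rel_sdiff_sdiff : ∀ X : Set E, (∀ x ∈ X, ¬ R X (X \ {x})) →
    ∀ x ∈ X, ∀ z ∈ X \ {x}, ¬ R ((X \ {x}) \ {z}) (X \ {x})

def irredundantSets {E : Type*} (R : Set E → Set E → Prop) : Set (Set E) :=
  {S | ∀ x ∈ S, ¬ R S (S \ {x})}

namespace Matroid

variable {α : Type*} {M : Matroid α} {I X Y Z : Set α} {x y : α}

lemma closure_eq_closure_union (h : M.closure X = M.closure Y) :
    M.closure X = M.closure (X ∪ Y) := by
  rw [closure_union_congr_right h.symm, union_self]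

lemma closure_eq_of_subset_of_subset (hXY : X ⊆ Y) (hYZ : Y ⊆ Z)
    (h : M.closure X = M.closure Z) : M.closure X = M.closure Y :=
  (M.closure_subset_closure hXY).antisymm (h ▸ M.closure_subset_closure hYZ)

lemma closure_insert_eq_of_closure_insert_insert
    (hy : M.closure (insert y X) = M.closure (insert x (insert y X)))
    (hx : M.closure (insert x X) ≠ M.closure (insert x (insert y X))) :
    M.closure (insert x X) = M.closure X := by
  by_contra hne
  have hxE : x ∈ M.E := by
    by_contra hxE
    rw [← closure_inter_ground, insert_inter_of_notMem hxE, closure_inter_ground] at hne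
    exact hne rfl
  have hxX : x ∉ M.closure X := fun h => hne (closure_insert_eq_of_mem_closure h)
  have hxy : x ∈ M.closure (insert y X) := hy ▸ M.mem_closure_of_mem' (mem_insert x _) hxE
  exact hx ((closure_insert_congr ⟨hxy, hxX⟩).trans hy)

lemma indep_of_forall_closure_ne (h : ∀ x ∈ I, M.closure I ≠ M.closure (I \ {x})) :
    M.Indep I := by
  have hIE : I ⊆ M.E := fun x hx => by
    by_contra hxE
    refine h x hx ?_
    rw [← closure_inter_ground, ← M.closure_inter_ground (I \ {x}), ← inter_sdiff_right_comm,
      sdiff_singleton_eq_self (fun h => hxE h.2)]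
  rw [indep_iff_forall_notMem_closure_sdiff hIE]
  exact fun x hx hcl => h x hx (closure_sdiff_singleton_eq_closure hcl).symm

theorem cospanningAxioms_closure_eq (M : Matroid α) :
    CospanningAxioms fun X Y : Set α => M.closure X = M.closure Y where
  equivalence := ⟨fun _ => rfl, Eq.symm, Eq.trans⟩
  union_right _ _ := closure_eq_closure_union
  of_subset_of_subset _ _ _ := closure_eq_of_subset_of_subset
  exchange X x _ _ hxX _ hy hx := ⟨x, mem_insert x X, by
    rw [insert_sdiff_self_of_notMem hxX, closure_insert_eq_of_closure_insert_insert hy hx]⟩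
  not_rel_sdiff_sdiff X hX x _ _ hz :=
    (((indep_of_forall_closure_ne hX).sdiff {x}).closure_sdiff_singleton_ssubset hz).ne

end Matroid

section HereditaryGreedoid

variable {E : Type*} [Finite E]

lemma exists_matroid_setOf_indep_eq {F : Set (Set E)} (hF : IsGreedoid F)
    (hHer : ∀ X Y : Set E, Y ⊆ X → X ∈ F → Y ∈ F) :
    ∃ M : Matroid E, M.E = univ ∧ {I | M.Indep I} = F := by
  refine ⟨(IndepMatroid.ofFinite finite_univ (· ∈ F) hF.1 (fun I J hJ hIJ => hHer J I hIJ hJ)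
    (fun I J hI hJ hlt => ?_) (fun _ _ => subset_univ _)).matroid, rfl, rfl⟩
  obtain ⟨e, ⟨heJ, heI⟩, he⟩ := hF.2 J hJ I hI hlt
  exact ⟨e, heJ, heI, he⟩

lemma Matroid.cast_greedoidRank_setOf_indep (M : Matroid E) (X : Set E) :
    (greedoidRank {I | M.Indep I} X : ℕ∞) = M.eRk X := by
  obtain ⟨I, hI⟩ := M.exists_isBasis' X
  have hbdd : BddAbove {n | ∃ A ∈ {I | M.Indep I}, A ⊆ X ∧ A.ncard = n} :=
    ⟨Nat.card E, by rintro _ ⟨A, -, -, rfl⟩; exact ncard_le_card A⟩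
  have hrk : greedoidRank {I | M.Indep I} X = I.ncard := by
    refine le_antisymm (csSup_le ⟨_, I, hI.indep, hI.subset, rfl⟩ ?_)
      (le_csSup hbdd ⟨I, hI.indep, hI.subset, rfl⟩)
    rintro _ ⟨J, hJ, hJX, rfl⟩
    have := hJ.encard_le_eRk_of_subset hJX
    rwa [← hI.encard_eq_eRk, ← (toFinite J).cast_ncard_eq, ← (toFinite I).cast_ncard_eq,
      Nat.cast_le] at this
  rw [hrk, (toFinite I).cast_ncard_eq, hI.encard_eq_eRk]

lemma Matroid.rankClosure_setOf_indep {M : Matroid E} (hM : M.E = univ) (X : Set E) :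
    rankClosure {I | M.Indep I} X = M.closure X := by
  ext e
  change greedoidRank _ (insert e X) = greedoidRank _ X ↔ _
  rw [← Nat.cast_inj (R := ℕ∞), M.cast_greedoidRank_setOf_indep,
    M.cast_greedoidRank_setOf_indep]
  refine ⟨fun h => by_contra fun he => ?_, fun he => ?_⟩
  · have hsucc := eRk_insert_eq_add_one (M := M) ⟨hM ▸ mem_univ e, he⟩
    rw [h, ← M.cast_greedoidRank_setOf_indep] at hsucc
    norm_cast at hsucc
    omega
  · rw [← eRk_insert_closure_eq, insert_eq_of_mem he, eRk_closure_eq]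

end HereditaryGreedoid

namespace CospanningAxioms

variable {E : Type*} {R : Set E → Set E → Prop} {A B S T X Y Z : Set E} {e : E}

lemma rel_union_iff [Finite E] (hR : CospanningAxioms R) :
    R X (X ∪ Y) ↔ ∀ y ∈ Y, R X (insert y X) := by
  refine ⟨fun h y hy => hR.of_subset_of_subset _ _ _ (subset_insert y X)
    (insert_subset (Or.inr hy) subset_union_left) h, fun h => ?_⟩
  induction Y, toFinite Y using Set.Finite.induction_on with
  | empty => rw [union_empty]; exact hR.equivalence.refl X
  | @insert a s _ _ ih =>
    have hXa := h a (mem_insert a s)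
    have hXs := ih fun y hy => h y (mem_insert_of_mem a hy)
    have hunion := hR.union_right _ _ (hR.equivalence.trans (hR.equivalence.symm hXa) hXs)
    rw [insert_union, ← union_assoc, union_self, ← union_insert] at hunion
    exact hR.equivalence.trans hXa hunion

lemma rel_iff_forall_rel_insert [Finite E] (hR : CospanningAxioms R) (hXZ : X ⊆ Z) :
    R X Z ↔ ∀ z ∈ Z, R X (insert z X) := by
  rw [← hR.rel_union_iff, union_eq_self_of_subset_left hXZ]

lemma rel_insert_iff_of_rel [Finite E] (hR : CospanningAxioms R) (hYX : Y ⊆ X) (h : R Y X) :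
    R X (insert e X) ↔ R Y (insert e Y) := by
  have hY := (hR.rel_iff_forall_rel_insert hYX).1 h
  calc R X (insert e X) ↔ R Y (insert e X) :=
        ⟨hR.equivalence.trans h, hR.equivalence.trans (hR.equivalence.symm h)⟩
    _ ↔ ∀ z ∈ insert e X, R Y (insert z Y) :=
        hR.rel_iff_forall_rel_insert (hYX.trans (subset_insert e X))
    _ ↔ R Y (insert e Y) := by rw [forall_mem_insert, and_iff_left hY]

lemma sdiff_singleton_mem_irredundantSets (hR : CospanningAxioms R)
    (hS : S ∈ irredundantSets R) (x : E) : S \ {x} ∈ irredundantSets R := by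
  by_cases hx : x ∈ S
  · exact fun z hz h => hR.not_rel_sdiff_sdiff S hS x hx z hz (hR.equivalence.symm h)
  · rwa [sdiff_singleton_eq_self hx]

lemma mem_irredundantSets_of_subset [Finite E] (hR : CospanningAxioms R)
    (hS : S ∈ irredundantSets R) (hTS : T ⊆ S) : T ∈ irredundantSets R := by
  suffices ∀ D : Set E, S \ D ∈ irredundantSets R by
    simpa [sdiff_sdiff_cancel_left hTS] using this (S \ T)
  intro D
  induction D, toFinite D using Set.Finite.induction_on with
  | empty => simpa
  | @insert a D _ _ ih =>
    rw [← union_singleton, ← sdiff_sdiff]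
    exact hR.sdiff_singleton_mem_irredundantSets ih a

lemma rel_insert_of_insert_mem {x y : E} (hR : CospanningAxioms R) (hxy : x ≠ y) (hx : x ∉ X)
    (hy : y ∉ X) (hins : insert x X ∈ irredundantSets R)
    (h : R (insert y X) (insert x (insert y X))) : R (insert x X) (insert x (insert y X)) := by
  by_contra h'
  obtain ⟨z, hz, hzR⟩ := hR.exchange X x y hxy hx hy h h'
  exact hins z hz (hR.equivalence.symm hzR)

lemma rel_insert_iff_insert_notMem (hR : CospanningAxioms R) (hA : A ∈ irredundantSets R)
    (he : e ∉ A) : R A (insert e A) ↔ insert e A ∉ irredundantSets R := by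
  refine ⟨fun h hins => hins e (mem_insert e A) ?_, fun hins => ?_⟩
  · rw [insert_sdiff_self_of_notMem he]; exact hR.equivalence.symm h
  simp only [irredundantSets, mem_ofPred_eq, not_forall, not_not] at hins
  obtain ⟨z, hz, hzR⟩ := hins
  rcases eq_or_ne z e with rfl | hze
  · rw [insert_sdiff_self_of_notMem he] at hzR; exact hR.equivalence.symm hzR
  have hzA : z ∈ A := (mem_insert_iff.1 hz).resolve_left hze
  have hA' : insert z (A \ {z}) = A := insert_sdiff_self_of_mem hzA
  have hzR' : R (insert e (A \ {z})) (insert z (insert e (A \ {z}))) := by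
    rw [insert_comm, hA', insert_sdiff_singleton_comm hze.symm]
    exact hR.equivalence.symm hzR
  have hspan := hR.rel_insert_of_insert_mem hze (fun h => h.2 rfl) (fun h => he h.1)
    (by rwa [hA']) hzR'
  rwa [insert_comm, hA'] at hspan

lemma rel_insert_sdiff_of_rel_insert (hR : CospanningAxioms R) {a b : E} (ha : a ∈ A)
    (hb : b ∉ A) (hins : insert b (A \ {a}) ∈ irredundantSets R) (h : R A (insert b A)) :
    R A (insert b (A \ {a})) := by
  have hexch := hR.rel_insert_of_insert_mem (ha.ne_of_notMem hb).symm (fun h => hb h.1)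
    (fun h => h.2 rfl) hins (by rwa [insert_sdiff_self_of_mem ha])
  rw [insert_sdiff_self_of_mem ha] at hexch
  exact hR.equivalence.trans h (hR.equivalence.symm hexch)

lemma rel_union_of_forall_insert_notMem [Finite E] (hR : CospanningAxioms R)
    (hA : A ∈ irredundantSets R) (h : ∀ b ∈ B \ A, insert b A ∉ irredundantSets R) :
    R A (A ∪ B) := by
  refine hR.rel_union_iff.2 fun b hb => ?_
  by_cases hbA : b ∈ A
  · rw [insert_eq_of_mem hbA]; exact hR.equivalence.refl A
  · exact (hR.rel_insert_iff_insert_notMem hA hbA).2 (h b ⟨hb, hbA⟩)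

/-- Induction on `|A \ B|`: an element of `A \ B` is either exchanged for an element of `B`
or dropped, and `A` still spans `B` afterwards. -/
lemma ncard_le_of_rel_union [Finite E] (hR : CospanningAxioms R)
    (hA : A ∈ irredundantSets R) (hB : B ∈ irredundantSets R) (h : R A (A ∪ B)) :
    B.ncard ≤ A.ncard := by
  obtain ⟨n, hn⟩ : ∃ n, (A \ B).ncard = n := ⟨_, rfl⟩
  induction n using Nat.strong_induction_on generalizing A with
  | _ n ih =>
  by_cases hAB : A ⊆ B
  · by_contra! hlt
    obtain ⟨b, hbB, hbA⟩ := exists_mem_notMem_of_ncard_lt_ncard hlt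
    exact (hR.rel_insert_iff_insert_notMem hA hbA).1 (hR.rel_union_iff.1 h b hbB)
      (hR.mem_irredundantSets_of_subset hB (insert_subset hbB hAB))
  obtain ⟨a, haA, haB⟩ := not_subset.1 hAB
  have hA' := hR.sdiff_singleton_mem_irredundantSets hA a
  have hlt : ((A \ {a}) \ B).ncard < n := by
    rw [← hn, sdiff_right_comm]; exact ncard_sdiff_singleton_lt_of_mem ⟨haA, haB⟩
  by_cases hex : ∃ b ∈ B \ A, insert b (A \ {a}) ∈ irredundantSets R
  · obtain ⟨b, ⟨hbB, hbA⟩, hb⟩ := hex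
    have hAC := hR.rel_insert_sdiff_of_rel_insert haA hbA hb (hR.rel_union_iff.1 h b hbB)
    have hCB : R (insert b (A \ {a})) (insert b (A \ {a}) ∪ B) :=
      hR.of_subset_of_subset _ _ _ subset_union_left
        (union_subset (insert_subset (Or.inr hbB) (sdiff_subset.trans subset_union_left))
          subset_union_right)
        (hR.equivalence.trans (hR.equivalence.symm hAC) h)
    calc B.ncard ≤ (insert b (A \ {a})).ncard :=
          ih _ (by rwa [insert_sdiff_of_mem _ hbB]) hb hCB rfl
      _ = A.ncard := by
          rw [ncard_insert_of_notMem fun h => hbA h.1, ncard_sdiff_singleton_add_one haA]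
  · push Not at hex
    have hA'B := hR.rel_union_of_forall_insert_notMem hA' fun b hb =>
      hex b ⟨hb.1, fun hbA => hb.2 ⟨hbA, fun hba => haB (hba ▸ hb.1)⟩⟩
    exact (ih _ hlt hA' hA'B rfl).trans (ncard_sdiff_singleton_le A a)

lemma isGreedoid_irredundantSets [Finite E] (hR : CospanningAxioms R) :
    IsGreedoid (irredundantSets R) := by
  refine ⟨fun _ h => h.elim, fun B hB A hA hlt => ?_⟩
  by_contra! hno
  exact (hR.ncard_le_of_rel_union hA hB (hR.rel_union_of_forall_insert_notMem hA hno)).not_gt hlt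

variable {M : Matroid E}

lemma mem_closure_iff_of_mem_irredundantSets (hR : CospanningAxioms R) (hM : M.E = univ)
    (hMR : {I | M.Indep I} = irredundantSets R) (hA : A ∈ irredundantSets R) :
    e ∈ M.closure A ↔ R A (insert e A) := by
  have hAi : M.Indep A := by rw [← hMR] at hA; exact hA
  by_cases he : e ∈ A
  · simp only [insert_eq_of_mem he, hR.equivalence.refl A, iff_true]
    exact M.mem_closure_of_mem he hAi.subset_ground
  · rw [hAi.mem_closure_iff_of_notMem he, dep_iff, hR.rel_insert_iff_insert_notMem hA he, ← hMR,
      hM]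
    simp

lemma mem_closure_iff [Finite E] (hR : CospanningAxioms R) (hM : M.E = univ)
    (hMR : {I | M.Indep I} = irredundantSets R) : e ∈ M.closure X ↔ R X (insert e X) := by
  obtain ⟨I, hI⟩ := M.exists_isBasis X (by simp [hM])
  have hIR : I ∈ irredundantSets R := hMR ▸ hI.indep
  have hIX : R I X := (hR.rel_iff_forall_rel_insert hI.subset).2 fun x hx =>
    (hR.mem_closure_iff_of_mem_irredundantSets hM hMR hIR).1 (hI.subset_closure hx)
  rw [← hI.closure_eq_closure, hR.mem_closure_iff_of_mem_irredundantSets hM hMR hIR,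
    hR.rel_insert_iff_of_rel hI.subset hIX]

lemma rel_iff_closure_eq [Finite E] (hR : CospanningAxioms R) (hM : M.E = univ)
    (hMR : {I | M.Indep I} = irredundantSets R) : R X Y ↔ M.closure X = M.closure Y := by
  have subset_closure_iff (S T : Set E) : T ⊆ M.closure S ↔ R S (S ∪ T) := by
    rw [hR.rel_union_iff]; exact forall₂_congr fun _ _ => hR.mem_closure_iff hM hMR
  have hsub (X : Set E) : X ⊆ M.closure X := M.subset_closure X (by simp [hM])
  constructor
  · intro h
    have hYX := (subset_closure_iff X Y).2 (hR.union_right X Y h)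
    have hXY := (subset_closure_iff Y X).2 (hR.union_right Y X (hR.equivalence.symm h))
    exact (closure_subset_closure_of_subset_closure hXY).antisymm
      (closure_subset_closure_of_subset_closure hYX)
  · intro h
    have hXU := (subset_closure_iff X Y).1 ((hsub Y).trans h.symm.subset)
    have hYU := (subset_closure_iff Y X).1 ((hsub X).trans h.subset)
    rw [union_comm] at hYU
    exact hR.equivalence.trans hXU (hR.equivalence.symm hYU)

end CospanningAxioms

theorem stmt18 {E : Type*} [Fintype E] (R : Set E → Set E → Prop) (hR : Equivalence R) :
    (∃ F : Set (Set E), IsGreedoid F ∧ (∀ X Y : Set E, Y ⊆ X → X ∈ F → Y ∈ F) ∧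
        ∀ X Y : Set E, R X Y ↔ rankClosure F X = rankClosure F Y) ↔
      ((∀ X Y : Set E, R X Y → R X (X ∪ Y)) ∧
       (∀ X Y Z : Set E, X ⊆ Y → Y ⊆ Z → R X Z → R X Y) ∧
       (∀ (X : Set E) (x y : E), x ≠ y → x ∉ X → y ∉ X →
         R (insert y X) (insert x (insert y X)) →
         ¬ R (insert x X) (insert x (insert y X)) →
         ∃ z ∈ insert x X, R ((insert x X) \ {z}) (insert x X)) ∧
       (∀ X : Set E, (∀ x ∈ X, ¬ R X (X \ {x})) →
         ∀ x ∈ X, ∀ z ∈ X \ {x}, ¬ R ((X \ {x}) \ {z}) (X \ {x}))) := by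
  constructor
  · rintro ⟨F, hF, hHer, hRF⟩
    obtain ⟨M, hM, rfl⟩ := exists_matroid_setOf_indep_eq hF hHer
    obtain rfl : R = fun X Y => M.closure X = M.closure Y := by
      ext X Y; rw [hRF, M.rankClosure_setOf_indep hM, M.rankClosure_setOf_indep hM]
    obtain ⟨-, h1, h2, h4, h5⟩ := M.cospanningAxioms_closure_eq
    exact ⟨h1, h2, h4, h5⟩
  · rintro ⟨h1, h2, h4, h5⟩
    have hRax : CospanningAxioms R := ⟨hR, h1, h2, h4, h5⟩
    have hHer : ∀ X Y : Set E, Y ⊆ X → X ∈ irredundantSets R → Y ∈ irredundantSets R :=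
      fun _ _ hYX hX => hRax.mem_irredundantSets_of_subset hX hYX
    obtain ⟨M, hM, hMR⟩ := exists_matroid_setOf_indep_eq hRax.isGreedoid_irredundantSets hHer
    refine ⟨irredundantSets R, hRax.isGreedoid_irredundantSets, hHer, fun X Y => ?_⟩
    rw [hRax.rel_iff_closure_eq hM hMR, ← hMR, M.rankClosure_setOf_indep hM,
      M.rankClosure_setOf_indep hM]
end
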